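/- arXiv:1105.3518 — 2 statements merged into one kernel-verified Lean document; each statement's English description precedes it below -/
import Mathlib

section
/- Let χ be a real primitive Dirichlet character modulo q, let χ₀ be the principal Dirichlet character modulo q, and let r, t be positive integers with gcd(rt, 6) = 1. Then for every complex w with Re w > 1, ∑_{n=1}^∞ μ²(n) χ₀(n) a(n) f_r(n) f_t(n) n^(-w) = ζ(w) L(w, χ) Q(w) P_{r,t}(w). -/
open Complex
open scoped ArithmeticFunction
open scoped ArithmeticFunction.Moebius ArithmeticFunction.omega

/-- f(n) = μ(n) 2^(-ω(n)) n. -/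
noncomputable def pseudoChar (n : ℕ) : ℝ := (μ n : ℝ) * n / 2 ^ (ω n)

/-- f_r(n) = f(gcd(n, r)). -/
noncomputable def pseudoCharAt (r n : ℕ) : ℝ := pseudoChar (Nat.gcd n r)

/-- Q(w) = ∏_{χ(p)=1} (1 - 3p^{-2w} + 2p^{-3w}) ∏_{χ(p)=-1} (1 - p^{-2w}) ∏_{p∣q} (1 - p^{-w}). -/
noncomputable def Qfun {q : ℕ} (χ : DirichletCharacter ℂ q) (w : ℂ) : ℂ :=
  (∏' p : Nat.Primes,
      if χ (p : ℕ) = 1 then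
        1 - 3 * ((p : ℕ) : ℂ) ^ (-2 * w) + 2 * ((p : ℕ) : ℂ) ^ (-3 * w)
      else 1) *
  (∏' p : Nat.Primes, if χ (p : ℕ) = -1 then 1 - ((p : ℕ) : ℂ) ^ (-2 * w) else 1) *
  (∏' p : Nat.Primes, if (p : ℕ) ∣ q then 1 - ((p : ℕ) : ℂ) ^ (-w) else 1)

/-- P_{r,t}(w) = ∏_{χ(p)=1, p ∣ rt} (1 + 2 f_r(p) f_t(p) p^{-w}) / (1 + 2p^{-w}). -/
noncomputable def Prt {q : ℕ} (χ : DirichletCharacter ℂ q) (r t : ℕ) (w : ℂ) : ℂ :=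
  ∏ p ∈ (r * t).primeFactors.filter (fun p : ℕ => χ (p : ZMod q) = 1),
    (1 + 2 * (pseudoCharAt r p : ℂ) * (pseudoCharAt t p : ℂ) * (p : ℂ) ^ (-w)) /
      (1 + 2 * (p : ℂ) ^ (-w))


/-!
The summand `g` is multiplicative and vanishes off the squarefree numbers, so for `Re w > 1` its
series is the Euler product `∏_p (1 + g p)`. Writing `x = p^{-w}`, one has `g p = 0` when
`χ p ≠ 1` and `g p = 2 f_r(p) f_t(p) x` when `χ p = 1`, and each local factor matches the one on
the right because `(1 - x)² (1 + 2x) = 1 - 3x² + 2x³`, `(1 - x)(1 + x) = 1 - x²` and, for `p ∣ q`,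
`(1 - x)⁻¹ (1 - x) = 1`.
-/

lemma pseudoChar_mul {a b : ℕ} (h : a.Coprime b) :
    pseudoChar (a * b) = pseudoChar a * pseudoChar b := by
  simp only [pseudoChar, ArithmeticFunction.isMultiplicative_moebius.map_mul_of_coprime h,
    ArithmeticFunction.cardDistinctFactors_mul h, pow_add]
  push_cast
  ring

lemma abs_pseudoChar_le (n : ℕ) : |pseudoChar n| ≤ n := by
  have hμ : |(μ n : ℝ)| ≤ 1 := by exact_mod_cast ArithmeticFunction.abs_moebius_le_one
  rw [pseudoChar, abs_div, abs_mul, abs_pow, abs_two, Nat.abs_cast]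
  calc |(μ n : ℝ)| * n / 2 ^ ω n ≤ |(μ n : ℝ)| * n :=
        div_le_self (by positivity) (one_le_pow₀ one_le_two)
    _ ≤ n := mul_le_of_le_one_left (Nat.cast_nonneg n) hμ

lemma pseudoCharAt_mul (r : ℕ) {m n : ℕ} (h : m.Coprime n) :
    pseudoCharAt r (m * n) = pseudoCharAt r m * pseudoCharAt r n := by
  rw [pseudoCharAt, Nat.gcd_comm, h.gcd_mul r, pseudoChar_mul (h.gcd_both r r),
    pseudoCharAt, pseudoCharAt, Nat.gcd_comm m, Nat.gcd_comm n]

lemma pseudoCharAt_of_not_dvd {p r : ℕ} (hp : p.Prime) (h : ¬p ∣ r) : pseudoCharAt r p = 1 := by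
  simp [pseudoCharAt, (hp.coprime_iff_not_dvd.mpr h).gcd_eq_one, pseudoChar]

lemma abs_pseudoCharAt_le {r : ℕ} (hr : 0 < r) (n : ℕ) : |pseudoCharAt r n| ≤ r :=
  (abs_pseudoChar_le _).trans (by exact_mod_cast Nat.le_of_dvd hr (Nat.gcd_dvd_right n r))

lemma DirichletCharacter.isQuadratic_of_im_eq_zero {q : ℕ} [NeZero q]
    {χ : DirichletCharacter ℂ q} (h : ∀ n : ℕ, (χ n).im = 0) : χ.IsQuadratic := by
  intro a
  by_cases ha : IsUnit a
  · have him := h a.val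
    rw [ZMod.natCast_zmod_val] at him
    have hre : χ a = ((χ a).re : ℂ) := Complex.ext rfl (by rw [Complex.ofReal_im, him])
    have hnorm : |(χ a).re| = 1 := by
      rw [← Real.norm_eq_abs, ← Complex.norm_real, ← hre, ← ha.unit_spec, χ.unit_norm_eq_one]
    rcases abs_eq zero_le_one |>.mp hnorm with h1 | h1 <;> rw [hre, h1] <;> simp
  · exact Or.inl (χ.map_nonunit ha)

lemma DirichletCharacter.sum_divisors_eq_zetaMul {q : ℕ} (χ : DirichletCharacter ℂ q) (n : ℕ) :
    ∑ d ∈ n.divisors, χ (d : ZMod q) = χ.zetaMul n := by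
  rw [DirichletCharacter.zetaMul, ArithmeticFunction.coe_zeta_mul_apply]
  refine Finset.sum_congr rfl fun d hd => ?_
  simp [toArithmeticFunction, (Nat.pos_of_mem_divisors hd).ne']

lemma hasProd_one_add_of_squarefree {R : Type*} [NormedCommRing R] [CompleteSpace R]
    {f : ℕ → R} (hf₁ : f 1 = 1) (hmul : ∀ {m n : ℕ}, m.Coprime n → f (m * n) = f m * f n)
    (hsq : ∀ n, ¬Squarefree n → f n = 0) (hsum : Summable (‖f ·‖)) :
    HasProd (fun p : Nat.Primes => 1 + f p) (∑' n, f n) := by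
  convert EulerProduct.eulerProduct_hasProd hf₁ hmul hsum (hsq 0 not_squarefree_zero) with p
  have hpow : ∀ e ∉ ({0, 1} : Finset ℕ), f ((p : ℕ) ^ e) = 0 := fun e he => by
    simp only [Finset.mem_insert, Finset.mem_singleton, not_or] at he
    exact hsq _ fun hsf => he.2 ((Nat.squarefree_pow_iff p.prop.ne_one he.1).mp hsf).2
  rw [tsum_eq_sum hpow, Finset.sum_pair zero_ne_one, pow_zero, pow_one, hf₁]

lemma hasProd_ite_mem_of_forall_prime {M : Type*} [CommMonoid M] [TopologicalSpace M]
    {S : Finset ℕ} (hS : ∀ n ∈ S, n.Prime) (F : ℕ → M) :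
    HasProd (fun p : Nat.Primes => if (p : ℕ) ∈ S then F p else 1) (∏ n ∈ S, F n) := by
  have h : HasProd (fun n : ℕ => if n ∈ S then F n else 1) (∏ n ∈ S, F n) := by
    rw [← Finset.prod_congr rfl fun n hn => if_pos hn]
    exact hasProd_prod_of_ne_finset_one fun n hn => if_neg hn
  exact (Nat.Primes.coe_nat_injective.hasProd_iff fun n hn => if_neg fun hmem =>
    hn ⟨⟨n, hS n hmem⟩, rfl⟩).mpr h

lemma multipliable_of_norm_sub_one_le {u : Nat.Primes → ℂ} {s : ℂ} (hs : 1 < s.re) {C : ℝ}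
    (hu : ∀ p : Nat.Primes, ‖u p - 1‖ ≤ C * ‖((p : ℕ) : ℂ) ^ (-s)‖) : Multipliable u := by
  have hsum : Summable fun p : Nat.Primes => C * ‖((p : ℕ) : ℂ) ^ (-s)‖ := by
    have hnorm (p : Nat.Primes) : ‖((p : ℕ) : ℂ) ^ (-s)‖ = (p : ℝ) ^ (-s.re) := by
      rw [norm_natCast_cpow_of_pos p.prop.pos, neg_re]
    simp_rw [hnorm]
    exact (Nat.Primes.summable_rpow.mpr (by linarith)).mul_left C
  simpa using multipliable_one_add_of_summable (f := fun p => u p - 1)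
    (hsum.of_nonneg_of_le (fun _ => norm_nonneg _) hu)

lemma Complex.cpow_neg_ofNat_mul (x w : ℂ) (n : ℕ) [n.AtLeastTwo] :
    x ^ (-OfNat.ofNat n * w) = (x ^ (-w)) ^ (OfNat.ofNat n : ℕ) := by
  rw [neg_mul, ← mul_neg, Complex.cpow_ofNat_mul]

lemma norm_prime_cpow_neg_lt_half {w : ℂ} (hw : 1 < w.re) (p : Nat.Primes) :
    ‖((p : ℕ) : ℂ) ^ (-w)‖ < 1 / 2 := by
  have h2 : (2 : ℝ) < (p : ℝ) ^ w.re := calc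
    (2 : ℝ) = 2 ^ (1 : ℝ) := (Real.rpow_one 2).symm
    _ < 2 ^ w.re := Real.rpow_lt_rpow_of_exponent_lt one_lt_two hw
    _ ≤ (p : ℝ) ^ w.re :=
      Real.rpow_le_rpow zero_le_two (by exact_mod_cast p.prop.two_le) (by linarith)
  rw [norm_natCast_cpow_of_pos p.prop.pos, neg_re, Real.rpow_neg (Nat.cast_nonneg _), one_div]
  exact (inv_lt_inv₀ (by positivity) two_pos).mpr h2

section EulerFactors

variable {q : ℕ} (χ : DirichletCharacter ℂ q) (r t : ℕ) (w : ℂ)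

noncomputable def seriesTerm (n : ℕ) : ℂ :=
  (μ n : ℂ) ^ 2 * ((1 : DirichletCharacter ℂ q) n) * (∑ d ∈ n.divisors, χ (d : ZMod q)) *
    (pseudoCharAt r n : ℂ) * (pseudoCharAt t n : ℂ) * (n : ℂ) ^ (-w)

lemma seriesTerm_one : seriesTerm χ r t w 1 = 1 := by
  simp [seriesTerm, pseudoCharAt, pseudoChar]

lemma seriesTerm_mul {m n : ℕ} (h : m.Coprime n) :
    seriesTerm χ r t w (m * n) = seriesTerm χ r t w m * seriesTerm χ r t w n := by
  simp only [seriesTerm, χ.sum_divisors_eq_zetaMul,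
    χ.isMultiplicative_zetaMul.map_mul_of_coprime h,
    ArithmeticFunction.isMultiplicative_moebius.map_mul_of_coprime h, Nat.cast_mul, map_mul,
    pseudoCharAt_mul _ h, Complex.natCast_mul_natCast_cpow]
  push_cast
  ring

lemma seriesTerm_of_not_squarefree {n : ℕ} (hn : ¬Squarefree n) : seriesTerm χ r t w n = 0 := by
  simp [seriesTerm, ArithmeticFunction.moebius_eq_zero_of_not_squarefree hn]

lemma seriesTerm_prime {p : ℕ} (hp : p.Prime) :
    seriesTerm χ r t w p = (1 : DirichletCharacter ℂ q) p * (1 + χ p) *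
      pseudoCharAt r p * pseudoCharAt t p * (p : ℂ) ^ (-w) := by
  rw [seriesTerm, ArithmeticFunction.moebius_apply_prime hp, hp.divisors,
    Finset.sum_pair hp.one_lt.ne, Nat.cast_one, map_one]
  push_cast
  ring

lemma seriesTerm_eq_mul_term (n : ℕ) :
    seriesTerm χ r t w n = (μ n : ℂ) ^ 2 * (1 : DirichletCharacter ℂ q) n *
      pseudoCharAt r n * pseudoCharAt t n * LSeries.term χ.zetaMul w n := by
  rcases eq_or_ne n 0 with rfl | hn
  · simp [seriesTerm]
  rw [seriesTerm, LSeries.term_of_ne_zero hn, χ.sum_divisors_eq_zetaMul, Complex.cpow_neg]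
  ring

variable {r t w} in
lemma summable_norm_seriesTerm (hr : 0 < r) (ht : 0 < t) (hw : 1 < w.re) :
    Summable (‖seriesTerm χ r t w ·‖) := by
  have hL : Summable fun n => (r * t : ℝ) * ‖LSeries.term χ.zetaMul w n‖ :=
    (summable_norm_iff.mpr (χ.LSeriesSummable_zetaMul hw)).mul_left _
  refine hL.of_nonneg_of_le (fun _ => norm_nonneg _) fun n => ?_
  have hμ : ‖(μ n : ℂ)‖ ≤ 1 := by
    rw [Complex.norm_intCast]
    exact_mod_cast ArithmeticFunction.abs_moebius_le_one
  have hχ₀ := (1 : DirichletCharacter ℂ q).norm_le_one n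
  have hfr := abs_pseudoCharAt_le hr n
  have hft := abs_pseudoCharAt_le ht n
  rw [seriesTerm_eq_mul_term]
  simp only [norm_mul, norm_pow, Complex.norm_real, Real.norm_eq_abs]
  calc _ ≤ 1 ^ 2 * 1 * r * t * ‖LSeries.term χ.zetaMul w n‖ := by gcongr
    _ = _ := by ring

noncomputable def qFactor (p : Nat.Primes) : ℂ :=
  (if χ (p : ℕ) = 1 then
      1 - 3 * ((p : ℕ) : ℂ) ^ (-2 * w) + 2 * ((p : ℕ) : ℂ) ^ (-3 * w) else 1) *
    (if χ (p : ℕ) = -1 then 1 - ((p : ℕ) : ℂ) ^ (-2 * w) else 1) *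
    (if (p : ℕ) ∣ q then 1 - ((p : ℕ) : ℂ) ^ (-w) else 1)

variable {w} in
lemma hasProd_qFactor (hw : 1 < w.re) : HasProd (qFactor χ w) (Qfun χ w) := by
  have hx (p : Nat.Primes) : ‖((p : ℕ) : ℂ) ^ (-w)‖ ≤ 1 :=
    (norm_prime_cpow_neg_lt_half hw p).le.trans (by norm_num)
  have h₁ : Multipliable fun p : Nat.Primes => if χ (p : ℕ) = 1 then
      1 - 3 * ((p : ℕ) : ℂ) ^ (-2 * w) + 2 * ((p : ℕ) : ℂ) ^ (-3 * w) else 1 := by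
    refine multipliable_of_norm_sub_one_le hw (C := 5) fun p => ?_
    split_ifs
    · have h := norm_add_le (-3 * (((p : ℕ) : ℂ) ^ (-w)) ^ 2) (2 * (((p : ℕ) : ℂ) ^ (-w)) ^ 3)
      simp only [norm_mul, norm_neg, norm_pow, Complex.norm_ofNat] at h
      rw [Complex.cpow_neg_ofNat_mul, Complex.cpow_neg_ofNat_mul,
        show ∀ y : ℂ, 1 - 3 * y ^ 2 + 2 * y ^ 3 - 1 = -3 * y ^ 2 + 2 * y ^ 3 from fun y => by ring]
      nlinarith [hx p, norm_nonneg (((p : ℕ) : ℂ) ^ (-w))]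
    · simp
  have h₂ : Multipliable fun p : Nat.Primes => if χ (p : ℕ) = -1 then
      1 - ((p : ℕ) : ℂ) ^ (-2 * w) else 1 := by
    refine multipliable_of_norm_sub_one_le hw (C := 1) fun p => ?_
    split_ifs
    · rw [Complex.cpow_neg_ofNat_mul, sub_sub_cancel_left, norm_neg, norm_pow, one_mul]
      nlinarith [hx p, norm_nonneg (((p : ℕ) : ℂ) ^ (-w))]
    · simp
  have h₃ : Multipliable fun p : Nat.Primes => if (p : ℕ) ∣ q then
      1 - ((p : ℕ) : ℂ) ^ (-w) else 1 := by
    refine multipliable_of_norm_sub_one_le hw (C := 1) fun p => ?_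
    split_ifs
    · rw [sub_sub_cancel_left, norm_neg, one_mul]
    · simp
  exact (h₁.hasProd.mul h₂.hasProd).mul h₃.hasProd

noncomputable def prtPrimes : Finset ℕ :=
  (r * t).primeFactors.filter (fun p : ℕ => χ (p : ZMod q) = 1)

noncomputable def prtFactor (p : ℕ) : ℂ :=
  (1 + 2 * (pseudoCharAt r p : ℂ) * (pseudoCharAt t p : ℂ) * (p : ℂ) ^ (-w)) /
    (1 + 2 * (p : ℂ) ^ (-w))

lemma hasProd_prtFactor :
    HasProd (fun p : Nat.Primes => if (p : ℕ) ∈ prtPrimes χ r t then prtFactor r t w p else 1)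
      (Prt χ r t w) :=
  hasProd_ite_mem_of_forall_prime
    (fun _ hn => Nat.prime_of_mem_primeFactors (Finset.mem_filter.mp hn).1) _

lemma mem_prtPrimes {p : ℕ} : p ∈ prtPrimes χ r t ↔ p ∈ (r * t).primeFactors ∧ χ p = 1 :=
  Finset.mem_filter

variable {r t} in
lemma ite_mem_prtPrimes_eq_prtFactor (hr : 0 < r) (ht : 0 < t) {p : ℕ} (hp : p.Prime)
    (hχ : χ p = 1) (hp' : 1 + 2 * (p : ℂ) ^ (-w) ≠ 0) :
    (if p ∈ prtPrimes χ r t then prtFactor r t w p else 1) = prtFactor r t w p := by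
  by_cases hrt : p ∣ r * t
  · rw [if_pos ((mem_prtPrimes χ r t).mpr ⟨Nat.mem_primeFactors.mpr ⟨hp, hrt, by positivity⟩, hχ⟩)]
  · rw [if_neg fun hmem => hrt (Nat.dvd_of_mem_primeFactors ((mem_prtPrimes χ r t).mp hmem).1),
      prtFactor, pseudoCharAt_of_not_dvd hp fun h => hrt (h.mul_right t),
      pseudoCharAt_of_not_dvd hp fun h => hrt (h.mul_left r)]
    simp [hp']

variable {χ r t w} in
lemma one_add_seriesTerm_prime [NeZero q] (hreal : ∀ n : ℕ, (χ n).im = 0) (hr : 0 < r)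
    (ht : 0 < t) (hw : 1 < w.re) (p : Nat.Primes) :
    1 + seriesTerm χ r t w p = (1 - (p : ℂ) ^ (-w))⁻¹ * (1 - χ p * (p : ℂ) ^ (-w))⁻¹ *
      qFactor χ w p * (if (p : ℕ) ∈ prtPrimes χ r t then prtFactor r t w p else 1) := by
  have hx := norm_prime_cpow_neg_lt_half hw p
  have h₁ : 1 - ((p : ℕ) : ℂ) ^ (-w) ≠ 0 := sub_ne_zero.mpr fun h => by
    norm_num [← h] at hx
  have h₂ : 1 + ((p : ℕ) : ℂ) ^ (-w) ≠ 0 := fun h => by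
    norm_num [eq_neg_of_add_eq_zero_right h] at hx
  have h₃ : 1 + 2 * ((p : ℕ) : ℂ) ^ (-w) ≠ 0 := fun h => by
    norm_num [show ((p : ℕ) : ℂ) ^ (-w) = -1 / 2 by linear_combination h / 2] at hx
  have hP (hχ : χ p ≠ 1) : (if (p : ℕ) ∈ prtPrimes χ r t then prtFactor r t w p else 1) = 1 :=
    if_neg fun h => hχ ((mem_prtPrimes χ r t).mp h).2
  rw [seriesTerm_prime χ r t w p.prop, qFactor, Complex.cpow_neg_ofNat_mul,
    Complex.cpow_neg_ofNat_mul]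
  by_cases hpq : (p : ℕ) ∣ q
  · have hu : ¬IsUnit ((p : ℕ) : ZMod q) := (ZMod.isUnit_prime_iff_not_dvd p.prop).not_left.mpr hpq
    have hχ : χ p = 0 := χ.map_nonunit hu
    rw [hP (by simp [hχ]), hχ, MulChar.map_nonunit _ hu, if_neg zero_ne_one, if_neg (by simp),
      if_pos hpq]
    field_simp
    ring
  · have hu : IsUnit ((p : ℕ) : ZMod q) := (ZMod.isUnit_prime_iff_not_dvd p.prop).mpr hpq
    rw [MulChar.one_apply hu, if_neg hpq]
    rcases χ.isQuadratic_of_im_eq_zero hreal (p : ℕ) with hχ | hχ | hχ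
    · exact absurd hχ (hu.map χ).ne_zero
    · rw [ite_mem_prtPrimes_eq_prtFactor χ w hr ht p.prop hχ h₃, prtFactor, hχ, if_pos rfl,
        if_neg (by norm_num)]
      generalize ((p : ℕ) : ℂ) ^ (-w) = x at h₁ h₃ ⊢
      rw [show 1 - 3 * x ^ 2 + 2 * x ^ 3 = (1 - x) ^ 2 * (1 + 2 * x) by ring]
      simp only [one_mul, mul_one]
      rw [mul_div_assoc', eq_div_iff h₃]
      field_simp
      ring
    · rw [hP (by rw [hχ]; norm_num), hχ, if_neg (by norm_num), if_pos rfl]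
      generalize ((p : ℕ) : ℂ) ^ (-w) = x at h₁ h₂ ⊢
      rw [show 1 - x ^ 2 = (1 - x) * (1 + x) by ring]
      simp only [one_mul, mul_one, neg_one_mul, sub_neg_eq_add]
      field_simp
      ring

end EulerFactors

theorem euler_product_identity_general (q : ℕ) [NeZero q] (χ : DirichletCharacter ℂ q)
    (hreal : ∀ n : ℕ, (χ n).im = 0)
    (r t : ℕ) (hr : 0 < r) (ht : 0 < t)
    (w : ℂ) (hw : 1 < w.re) :
    ∑' n : ℕ, ((μ n : ℂ) ^ 2 * ((1 : DirichletCharacter ℂ q) n) *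
        (∑ d ∈ n.divisors, χ (d : ZMod q)) *
        (pseudoCharAt r n : ℂ) * (pseudoCharAt t n : ℂ) * (n : ℂ) ^ (-w)) =
      riemannZeta w * χ.LFunction w * Qfun χ w * Prt χ r t w := by
  have hseries := hasProd_one_add_of_squarefree (seriesTerm_one χ r t w) (seriesTerm_mul χ r t w)
    (fun _ => seriesTerm_of_not_squarefree χ r t w) (summable_norm_seriesTerm χ hr ht hw)
  have hfactors := (((riemannZeta_eulerProduct_hasProd hw).mul
    (χ.LSeries_eulerProduct_hasProd hw)).mul (hasProd_qFactor χ hw)).mul (hasProd_prtFactor χ r t w)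
  rw [χ.LFunction_eq_LSeries hw]
  refine hseries.unique ?_
  convert hfactors using 1
  funext p
  exact one_add_seriesTerm_prime hreal hr ht hw p

/-- For Re w > 1,
∑ₙ μ²(n) χ₀(n) a(n) f_r(n) f_t(n) n^{-w} = ζ(w) L(w,χ) Q(w) P_{r,t}(w). -/
theorem euler_product_identity (q : ℕ) [NeZero q] (χ : DirichletCharacter ℂ q)
    (hreal : ∀ n : ℕ, (χ n).im = 0) (hprim : χ.IsPrimitive)
    (r t : ℕ) (hr : 0 < r) (ht : 0 < t) (hrt6 : Nat.gcd (r * t) 6 = 1)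
    (w : ℂ) (hw : 1 < w.re) :
    ∑' n : ℕ, ((μ n : ℂ) ^ 2 * ((1 : DirichletCharacter ℂ q) n) *
        (∑ d ∈ n.divisors, χ (d : ZMod q)) *
        (pseudoCharAt r n : ℂ) * (pseudoCharAt t n : ℂ) * (n : ℂ) ^ (-w)) =
      riemannZeta w * χ.LFunction w * Qfun χ w * Prt χ r t w :=
  euler_product_identity_general q χ hreal r t hr ht w hw
end

section
/- There exists an absolute constant C > 0 such that for all R ≥ 3, ∑_{1 ≤ r ≤ R} 2^(-ω(r)) / r ≤ C (log R)^(1/2). -/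
/-!
Write `S(M) = ∑_{r ≤ M} 2^{-ω(r)}/r`. In `S(M)²`, split each pair as `(r, s) = (g a, g b)` with
`g = gcd(r, s)`; then `a, b` are coprime and `ω(ab) = ω(a) + ω(b) ≤ ω(r) + ω(s)`, so
`S(M)² ≤ ∑_g g⁻² · ∑_{a, b ≤ M coprime} 2^{-ω(ab)}/(ab)`. An integer `n` has at most `2^{ω(n)}`
factorisations `n = ab` into coprime factors, which cancels the weight `2^{-ω(n)}`: the inner sum
is at most the harmonic sum up to `M²`, giving `S(M)² ≤ 2 (1 + 2 log M)`.
-/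

open scoped ArithmeticFunction ArithmeticFunction.omega

open Finset

theorem Finset.sum_le_sum_of_injOn {ι κ M : Type*} [AddCommMonoid M] [PartialOrder M]
    [IsOrderedAddMonoid M] {s : Finset ι} {t : Finset κ} {f : ι → M} {g : κ → M} (e : ι → κ)
    (he : Set.InjOn e s) (hest : Set.MapsTo e s t) (hg : ∀ j ∈ t, 0 ≤ g j)
    (hfg : ∀ i ∈ s, f i ≤ g (e i)) : ∑ i ∈ s, f i ≤ ∑ j ∈ t, g j := by
  classical
  calc ∑ i ∈ s, f i ≤ ∑ i ∈ s, g (e i) := sum_le_sum hfg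
    _ = ∑ j ∈ s.image e, g j := (sum_image he).symm
    _ ≤ ∑ j ∈ t, g j :=
      sum_le_sum_of_subset_of_nonneg (image_subset_iff.mpr hest) fun j hj _ => hg j hj

namespace ArithmeticFunction

theorem cardDistinctFactors_eq_card_primeFactors (n : ℕ) : ω n = n.primeFactors.card := by
  rw [cardDistinctFactors_apply, Nat.primeFactors, List.card_toFinset]

theorem cardDistinctFactors_le_of_dvd {m n : ℕ} (h : m ∣ n) (hn : n ≠ 0) : ω m ≤ ω n := by
  simpa only [cardDistinctFactors_eq_card_primeFactors] using
    card_le_card (Nat.primeFactors_mono h hn)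

end ArithmeticFunction

namespace Nat

theorem Coprime.dvd_of_dvd_mul_of_primeFactors_eq {a a' b' : ℕ} (ha'b' : a'.Coprime b')
    (h : a ∣ a' * b') (h0 : a' * b' ≠ 0) (hp : a.primeFactors = a'.primeFactors) : a ∣ a' := by
  have hab' : a.Coprime b' := by
    rw [← disjoint_primeFactors (ne_zero_of_dvd_ne_zero h0 h) (right_ne_zero_of_mul h0), hp]
    exact ha'b'.disjoint_primeFactors
  exact hab'.dvd_of_dvd_mul_right h

/-- A coprime factorisation `n = a * b` is determined by the set of primes dividing `a`. -/
theorem card_coprime_divisorsAntidiagonal_le (n : ℕ) :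
    #{p ∈ n.divisorsAntidiagonal | p.1.Coprime p.2} ≤ 2 ^ ω n := by
  rw [ArithmeticFunction.cardDistinctFactors_eq_card_primeFactors, ← card_powerset]
  refine card_le_card_of_injOn (fun p => p.1.primeFactors) (fun p hp => ?_)
    fun p hp q hq hpq => ?_
  · simp only [coe_filter, mem_divisorsAntidiagonal, Set.mem_ofPred_eq] at hp
    exact mem_powerset.mpr (primeFactors_mono (Dvd.intro _ hp.1.1) hp.1.2)
  · simp only [coe_filter, mem_divisorsAntidiagonal, Set.mem_ofPred_eq] at hp hq
    obtain ⟨⟨hpn, hn⟩, hpc⟩ := hp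
    obtain ⟨⟨hqn, -⟩, hqc⟩ := hq
    have hpq₁ : p.1 = q.1 := dvd_antisymm
      (hqc.dvd_of_dvd_mul_of_primeFactors_eq (hqn ▸ Dvd.intro _ hpn) (hqn ▸ hn) hpq)
      (hpc.dvd_of_dvd_mul_of_primeFactors_eq (hpn ▸ Dvd.intro _ hqn) (hpn ▸ hn) hpq.symm)
    have hp₁ : 0 < p.1 := pos_of_ne_zero (left_ne_zero_of_mul (hpn ▸ hn))
    exact Prod.ext hpq₁ (Nat.eq_of_mul_eq_mul_left hp₁ (by rw [hpn, hpq₁, hqn]))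

end Nat

theorem sum_Icc_inv_sq_le_two (M : ℕ) : ∑ g ∈ Icc 1 M, ((g : ℝ) ^ 2)⁻¹ ≤ 2 := by
  have hIcc : Icc 1 M = Ioo 0 (M + 1) := by ext; simp only [mem_Icc, mem_Ioo]; omega
  simpa [hIcc] using sum_Ioo_inv_sq_le (α := ℝ) 0 (M + 1)

theorem sum_Icc_inv_le_one_add_log (N : ℕ) : ∑ n ∈ Icc 1 N, (n : ℝ)⁻¹ ≤ 1 + Real.log N := by
  simpa [harmonic_eq_sum_Icc] using harmonic_le_one_add_log N

noncomputable def omegaWeight (r : ℕ) : ℝ := ((2 : ℝ) ^ ω r)⁻¹ / r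

theorem omegaWeight_nonneg (r : ℕ) : 0 ≤ omegaWeight r := by
  unfold omegaWeight; positivity

theorem two_pow_omega_mul_omegaWeight (n : ℕ) : 2 ^ ω n * omegaWeight n = (n : ℝ)⁻¹ := by
  rw [omegaWeight, div_eq_mul_inv, mul_inv_cancel_left₀ (by positivity)]

theorem omegaWeight_mul_mul_le {g a b : ℕ} (hab : a.Coprime b) (hg : g ≠ 0) (ha : a ≠ 0)
    (hb : b ≠ 0) :
    omegaWeight (g * a) * omegaWeight (g * b) ≤ ((g : ℝ) ^ 2)⁻¹ * omegaWeight (a * b) := by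
  have hω : ω (a * b) ≤ ω (g * a) + ω (g * b) := by
    rw [ArithmeticFunction.cardDistinctFactors_mul hab]
    exact add_le_add
      (ArithmeticFunction.cardDistinctFactors_le_of_dvd (dvd_mul_left a g) (mul_ne_zero hg ha))
      (ArithmeticFunction.cardDistinctFactors_le_of_dvd (dvd_mul_left b g) (mul_ne_zero hg hb))
  have h2 : ((2 : ℝ) ^ (ω (g * a) + ω (g * b)))⁻¹ ≤ ((2 : ℝ) ^ ω (a * b))⁻¹ :=
    inv_anti₀ (by positivity) (pow_le_pow_right₀ one_le_two hω)
  calc omegaWeight (g * a) * omegaWeight (g * b)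
      = ((2 : ℝ) ^ (ω (g * a) + ω (g * b)))⁻¹ * (((g : ℝ) ^ 2)⁻¹ * ((a * b : ℕ) : ℝ)⁻¹) := by
        simp only [omegaWeight, pow_add]; push_cast; field_simp
    _ ≤ ((2 : ℝ) ^ ω (a * b))⁻¹ * (((g : ℝ) ^ 2)⁻¹ * ((a * b : ℕ) : ℝ)⁻¹) := by gcongr
    _ = ((g : ℝ) ^ 2)⁻¹ * omegaWeight (a * b) := by rw [omegaWeight, div_eq_mul_inv]; ring

theorem sum_omegaWeight_mul_le_sum_coprime (M : ℕ) :
    ∑ p ∈ Icc 1 M ×ˢ Icc 1 M, omegaWeight p.1 * omegaWeight p.2 ≤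
      ∑ x ∈ Icc 1 M ×ˢ {p ∈ Icc 1 M ×ˢ Icc 1 M | p.1.Coprime p.2},
        ((x.1 : ℝ) ^ 2)⁻¹ * omegaWeight (x.2.1 * x.2.2) := by
  let gcdSplit (p : ℕ × ℕ) : ℕ × ℕ × ℕ :=
    (p.1.gcd p.2, p.1 / p.1.gcd p.2, p.2 / p.1.gcd p.2)
  have hsplit (p : ℕ × ℕ) : p.1.gcd p.2 * (p.1 / p.1.gcd p.2) = p.1 ∧
      p.1.gcd p.2 * (p.2 / p.1.gcd p.2) = p.2 :=
    ⟨Nat.mul_div_cancel' (Nat.gcd_dvd_left _ _), Nat.mul_div_cancel' (Nat.gcd_dvd_right _ _)⟩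
  have hmaps : ∀ p ∈ Icc 1 M ×ˢ Icc 1 M,
      gcdSplit p ∈ Icc 1 M ×ˢ {p ∈ Icc 1 M ×ˢ Icc 1 M | p.1.Coprime p.2} := by
    intro p hp
    simp only [mem_product, mem_Icc] at hp
    have hg : 0 < p.1.gcd p.2 := Nat.gcd_pos_of_pos_left _ (by omega)
    simp only [gcdSplit, mem_product, mem_filter, mem_Icc]
    refine ⟨⟨hg, ?_⟩, ⟨⟨?_, ?_⟩, ?_, ?_⟩, Nat.coprime_div_gcd_div_gcd hg⟩
    · exact (Nat.gcd_le_left _ (by omega)).trans hp.1.2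
    · exact Nat.div_pos (Nat.gcd_le_left _ (by omega)) hg
    · exact (Nat.div_le_self _ _).trans hp.1.2
    · exact Nat.div_pos (Nat.gcd_le_right _ (by omega)) hg
    · exact (Nat.div_le_self _ _).trans hp.2.2
  refine sum_le_sum_of_injOn gcdSplit (fun p _ q _ hpq => ?_) hmaps
    (fun x _ => mul_nonneg (by positivity) (omegaWeight_nonneg _)) fun p hp => ?_
  · simp only [gcdSplit, Prod.mk.injEq] at hpq
    obtain ⟨hg, ha, hb⟩ := hpq
    exact Prod.ext (by rw [← (hsplit p).1, ha, hg, (hsplit q).1])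
      (by rw [← (hsplit p).2, hb, hg, (hsplit q).2])
  · have hsplit_mem := hmaps p hp
    simp only [gcdSplit, mem_product, mem_filter, mem_Icc] at hsplit_mem
    obtain ⟨⟨hg, -⟩, ⟨⟨ha, -⟩, hb, -⟩, hab⟩ := hsplit_mem
    have h := omegaWeight_mul_mul_le hab (Nat.one_le_iff_ne_zero.mp hg)
      (Nat.one_le_iff_ne_zero.mp ha) (Nat.one_le_iff_ne_zero.mp hb)
    rwa [(hsplit p).1, (hsplit p).2] at h

theorem sum_coprime_omegaWeight_le (M : ℕ) :
    ∑ p ∈ Icc 1 M ×ˢ Icc 1 M with p.1.Coprime p.2, omegaWeight (p.1 * p.2) ≤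
      ∑ n ∈ Icc 1 (M ^ 2), (n : ℝ)⁻¹ := by
  have hmaps : ∀ p ∈ {p ∈ Icc 1 M ×ˢ Icc 1 M | p.1.Coprime p.2}, p.1 * p.2 ∈ Icc 1 (M ^ 2) := by
    intro p hp
    simp only [mem_filter, mem_product, mem_Icc] at hp ⊢
    constructor <;> nlinarith
  rw [← sum_fiberwise_of_maps_to hmaps]
  refine sum_le_sum fun n hn => ?_
  have hfiber : {p ∈ {p ∈ Icc 1 M ×ˢ Icc 1 M | p.1.Coprime p.2} | p.1 * p.2 = n} ⊆
      {p ∈ n.divisorsAntidiagonal | p.1.Coprime p.2} := by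
    intro p hp
    simp only [mem_filter, mem_Icc, Nat.mem_divisorsAntidiagonal] at hp hn ⊢
    exact ⟨⟨hp.2, by omega⟩, hp.1.2⟩
  calc ∑ p ∈ {p ∈ {p ∈ Icc 1 M ×ˢ Icc 1 M | p.1.Coprime p.2} | p.1 * p.2 = n},
        omegaWeight (p.1 * p.2)
      = #{p ∈ {p ∈ Icc 1 M ×ˢ Icc 1 M | p.1.Coprime p.2} | p.1 * p.2 = n} * omegaWeight n := by
        rw [sum_congr rfl fun p hp => by rw [(mem_filter.mp hp).2], sum_const, nsmul_eq_mul]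
    _ ≤ 2 ^ ω n * omegaWeight n := by
        gcongr
        · exact omegaWeight_nonneg n
        · exact_mod_cast (card_le_card hfiber).trans (Nat.card_coprime_divisorsAntidiagonal_le n)
    _ = (n : ℝ)⁻¹ := two_pow_omega_mul_omegaWeight n

theorem sq_sum_omegaWeight_le (M : ℕ) :
    (∑ r ∈ Icc 1 M, omegaWeight r) ^ 2 ≤ 2 * (1 + 2 * Real.log M) :=
  calc (∑ r ∈ Icc 1 M, omegaWeight r) ^ 2
      = ∑ p ∈ Icc 1 M ×ˢ Icc 1 M, omegaWeight p.1 * omegaWeight p.2 := by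
        rw [sq, sum_mul_sum, sum_product]
    _ ≤ ∑ x ∈ Icc 1 M ×ˢ {p ∈ Icc 1 M ×ˢ Icc 1 M | p.1.Coprime p.2},
          ((x.1 : ℝ) ^ 2)⁻¹ * omegaWeight (x.2.1 * x.2.2) :=
        sum_omegaWeight_mul_le_sum_coprime M
    _ = (∑ g ∈ Icc 1 M, ((g : ℝ) ^ 2)⁻¹) *
          ∑ p ∈ Icc 1 M ×ˢ Icc 1 M with p.1.Coprime p.2, omegaWeight (p.1 * p.2) := by
        rw [sum_product, sum_mul_sum]
    _ ≤ 2 * (1 + Real.log ((M ^ 2 : ℕ) : ℝ)) :=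
        mul_le_mul (sum_Icc_inv_sq_le_two M)
          ((sum_coprime_omegaWeight_le M).trans (sum_Icc_inv_le_one_add_log _))
          (sum_nonneg fun _ _ => omegaWeight_nonneg _) zero_le_two
    _ = 2 * (1 + 2 * Real.log M) := by push_cast; rw [Real.log_pow]; norm_num

/-- ∑_{1 ≤ r ≤ R} 2^(-ω(r))/r ≤ C (log R)^(1/2) for all R ≥ 3. -/
theorem sum_two_pow_neg_omega_div_bound :
    ∃ C : ℝ, 0 < C ∧ ∀ R : ℝ, 3 ≤ R →
      ∑ r ∈ Finset.Icc 1 ⌊R⌋₊, ((2 : ℝ) ^ (ω r))⁻¹ / r ≤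
        C * (Real.log R) ^ ((1 : ℝ) / 2) := by
  refine ⟨√6, by positivity, fun R hR => ?_⟩
  have hlogR : 1 ≤ Real.log R := by
    rw [Real.le_log_iff_exp_le (by linarith)]
    linarith [Real.exp_one_lt_d9]
  have hlogM : Real.log ⌊R⌋₊ ≤ Real.log R :=
    Real.log_le_log (by exact_mod_cast Nat.floor_pos.mpr (by linarith))
      (Nat.floor_le (by linarith))
  have hsq : (∑ r ∈ Icc 1 ⌊R⌋₊, omegaWeight r) ^ 2 ≤ 6 * Real.log R := by
    linarith [sq_sum_omegaWeight_le ⌊R⌋₊]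
  calc ∑ r ∈ Icc 1 ⌊R⌋₊, omegaWeight r ≤ √(6 * Real.log R) :=
        (le_abs_self _).trans (Real.abs_le_sqrt hsq)
    _ = √6 * Real.log R ^ ((1 : ℝ) / 2) := by
        rw [Real.sqrt_mul (by norm_num), ← Real.sqrt_eq_rpow]
end
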